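/- arXiv:2112.10361 — 2 statements merged into one kernel-verified Lean document; each statement's English description precedes it below -/
import Mathlib

section
/- Suppose u ∈ H¹(ℝ) is smooth enough and m = u − u_{xx} ≥ 0 on ℝ. Then u ± u_x = 2 p_∓ * m ≥ 0 pointwise, and consequently |u_x(x)| ≤ u(x) for all x ∈ ℝ. -/
open MeasureTheory Real

/-- The kernel `p(x) = (1/2) e^{-|x|}`. -/
noncomputable def pker (x : ℝ) : ℝ := (1/2) * Real.exp (-|x|)

/-- `p_+ * f (x) = (1/2) e^{-x} ∫_{-∞}^{x} e^{y} f(y) dy`. -/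
noncomputable def pPlus (f : ℝ → ℝ) (x : ℝ) : ℝ :=
  (1/2) * Real.exp (-x) * ∫ y in Set.Iic x, Real.exp y * f y

/-- `p_- * f (x) = (1/2) e^{x} ∫_{-∞}^{-x} e^{y} f(-y) dy`. -/
noncomputable def pMinus (f : ℝ → ℝ) (x : ℝ) : ℝ :=
  (1/2) * Real.exp x * ∫ y in Set.Iic (-x), Real.exp y * f (-y)

/-!
Splitting the convolution `u = p * m` at `x` writes `u = p₊ * m + p₋ * m`. Each half solves a
first-order equation, `(p₊ * m)' = -(p₊ * m) + m/2` and `(p₋ * m)' = p₋ * m - m/2`, so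
`u' = p₋ * m - p₊ * m` and `u ± u' = 2 p_∓ * m`. Both halves are nonnegative when `m ≥ 0`,
which gives `|u'| ≤ u`.
-/

open Set

theorem hasDerivAt_setIntegral_Iic {g : ℝ → ℝ} (hg : Continuous g)
    (hgi : ∀ a, IntegrableOn g (Iic a)) (x : ℝ) :
    HasDerivAt (fun t => ∫ y in Iic t, g y) (g x) x := by
  have hsplit : ∀ t, ∫ y in Iic t, g y = (∫ y in Iic 0, g y) + ∫ y in (0 : ℝ)..t, g y :=
    fun t => by linarith [intervalIntegral.integral_Iic_sub_Iic (hgi 0) (hgi t)]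
  exact (((hg.integral_hasStrictDerivAt 0 x).hasDerivAt).const_add _).congr_of_eventuallyEq
    (.of_forall hsplit)

theorem integrableOn_Iic_exp_mul {f : ℝ → ℝ} (hf : Integrable f) (a : ℝ) :
    IntegrableOn (fun y => exp y * f y) (Iic a) := by
  refine hf.integrableOn.bdd_mul (c := exp a) continuous_exp.aestronglyMeasurable ?_
  filter_upwards [ae_restrict_mem measurableSet_Iic] with y hy
  simpa [abs_of_pos (exp_pos y)] using exp_le_exp.mpr hy

theorem pMinus_eq_pPlus_comp_neg (f : ℝ → ℝ) (x : ℝ) :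
    pMinus f x = pPlus (fun y => f (-y)) (-x) := by
  rw [pPlus, neg_neg]
  rfl

theorem pPlus_nonneg {f : ℝ → ℝ} (hf : ∀ x, 0 ≤ f x) (x : ℝ) : 0 ≤ pPlus f x := by
  have : 0 ≤ ∫ y in Iic x, exp y * f y :=
    setIntegral_nonneg measurableSet_Iic fun y _ => mul_nonneg (exp_pos y).le (hf y)
  unfold pPlus
  positivity

theorem pMinus_nonneg {f : ℝ → ℝ} (hf : ∀ x, 0 ≤ f x) (x : ℝ) : 0 ≤ pMinus f x := by
  rw [pMinus_eq_pPlus_comp_neg]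
  exact pPlus_nonneg (fun y => hf (-y)) _

theorem hasDerivAt_pPlus {f : ℝ → ℝ} (hf : Continuous f) (hfi : Integrable f) (x : ℝ) :
    HasDerivAt (pPlus f) (-pPlus f x + f x / 2) x := by
  have hexp : HasDerivAt (fun t => (1/2 : ℝ) * exp (-t)) (-((1/2 : ℝ) * exp (-x))) x := by
    simpa using ((hasDerivAt_neg x).exp).const_mul (1/2 : ℝ)
  have hint := hasDerivAt_setIntegral_Iic (g := fun y => exp y * f y) (continuous_exp.mul hf)
    (integrableOn_Iic_exp_mul hfi) x
  refine (hexp.mul hint).congr_deriv ?_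
  have : exp (-x) * exp x = 1 := by rw [← exp_add, neg_add_cancel, exp_zero]
  simp only [pPlus]
  linear_combination (f x / 2) * this

theorem hasDerivAt_pMinus {f : ℝ → ℝ} (hf : Continuous f) (hfi : Integrable f) (x : ℝ) :
    HasDerivAt (pMinus f) (pMinus f x - f x / 2) x := by
  have h := (hasDerivAt_pPlus (f := fun y => f (-y)) (hf.comp continuous_neg) hfi.comp_neg
    (-x)).comp x (hasDerivAt_neg x)
  rw [show pMinus f = fun t => pPlus (fun y => f (-y)) (-t) from
    funext (pMinus_eq_pPlus_comp_neg f)]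
  refine h.congr_deriv ?_
  simp only [neg_neg]
  ring

theorem integrable_pker_sub_mul {f : ℝ → ℝ} (hf : Integrable f) (x : ℝ) :
    Integrable (fun y => pker (x - y) * f y) := by
  refine hf.bdd_mul (c := 1/2) ?_ (ae_of_all _ fun y => ?_)
  · exact (continuous_const.mul (continuous_exp.comp (continuous_const.sub continuous_id).abs.neg))
      |>.aestronglyMeasurable
  · simp only [pker, norm_mul, norm_div, norm_one, Real.norm_ofNat, norm_of_nonneg (exp_pos _).le]
    have : exp (-|x - y|) ≤ 1 := exp_le_one_iff.mpr (neg_nonpos.mpr (abs_nonneg _))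
    linarith

theorem integral_pker_sub_mul_eq_pPlus_add_pMinus {f : ℝ → ℝ} (hf : Integrable f) (x : ℝ) :
    ∫ y, pker (x - y) * f y = pPlus f x + pMinus f x := by
  have hint := integrable_pker_sub_mul hf x
  rw [← intervalIntegral.integral_Iic_add_Ioi hint.integrableOn hint.integrableOn]
  congr 1
  · rw [pPlus, ← integral_const_mul]
    refine setIntegral_congr_fun measurableSet_Iic fun y (hy : y ≤ x) => ?_
    rw [pker, abs_of_nonneg (sub_nonneg.mpr hy), neg_sub, sub_eq_add_neg, exp_add]
    ring
  · have hneg : ∫ y in Iic (-x), exp y * f (-y) = ∫ y in Ioi x, exp (-y) * f y := by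
      simpa using integral_comp_neg_Iic (-x) (fun y => exp (-y) * f y)
    rw [pMinus, hneg, ← integral_const_mul]
    refine setIntegral_congr_fun measurableSet_Ioi fun y (hy : x < y) => ?_
    rw [pker, abs_of_neg (sub_neg.mpr hy), neg_neg, sub_eq_add_neg, exp_add]
    ring

theorem sign_preservation_estimates_general (u m : ℝ → ℝ)
    (hm : Integrable m) (hmpos : ∀ x, 0 ≤ m x)
    (hu : ∀ x, u x = ∫ y : ℝ, pker (x - y) * m y)
    (hsmooth : ContDiff ℝ 2 u)
    (hmdef : ∀ x, m x = u x - deriv (deriv u) x) :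
    ∀ x : ℝ,
      u x + deriv u x = 2 * pMinus m x ∧
      u x - deriv u x = 2 * pPlus m x ∧
      0 ≤ u x + deriv u x ∧
      0 ≤ u x - deriv u x ∧
      |deriv u x| ≤ u x := by
  have hmc : Continuous m := by
    rw [funext hmdef]
    exact hsmooth.continuous.sub (ContDiff.deriv' (n := 1) hsmooth).continuous_deriv_one
  have hsplit : u = pPlus m + pMinus m :=
    funext fun x => (hu x).trans (integral_pker_sub_mul_eq_pPlus_add_pMinus hm x)
  have hderiv : ∀ x, deriv u x = pMinus m x - pPlus m x := fun x => by
    rw [hsplit]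
    exact ((hasDerivAt_pPlus hmc hm x).add (hasDerivAt_pMinus hmc hm x)).deriv.trans (by ring)
  intro x
  have hplus : u x + deriv u x = 2 * pMinus m x := by rw [hderiv, hsplit, Pi.add_apply]; ring
  have hminus : u x - deriv u x = 2 * pPlus m x := by rw [hderiv, hsplit, Pi.add_apply]; ring
  have hPlus_nonneg := pPlus_nonneg hmpos x
  have hMinus_nonneg := pMinus_nonneg hmpos x
  refine ⟨hplus, hminus, by linarith, by linarith, abs_le.mpr ⟨by linarith, by linarith⟩⟩

/-- If `u = p * m` is sufficiently smooth, `u ∈ H¹`, and `m = u - u_xx ≥ 0`, then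
`u + u_x = 2 p_- * m ≥ 0`, `u - u_x = 2 p_+ * m ≥ 0`, and hence `|u_x| ≤ u` pointwise. -/
theorem sign_preservation_estimates (u m : ℝ → ℝ)
    (hm : Integrable m) (hmpos : ∀ x, 0 ≤ m x)
    (hu : ∀ x, u x = ∫ y : ℝ, pker (x - y) * m y)
    (hH1u : MemLp u 2 (volume : Measure ℝ))
    (hH1ux : MemLp (deriv u) 2 (volume : Measure ℝ))
    (hsmooth : ContDiff ℝ 2 u)
    (hmdef : ∀ x, m x = u x - deriv (deriv u) x) :
    ∀ x : ℝ,
      u x + deriv u x = 2 * pMinus m x ∧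
      u x - deriv u x = 2 * pPlus m x ∧
      0 ≤ u x + deriv u x ∧
      0 ≤ u x - deriv u x ∧
      |deriv u x| ≤ u x :=
  sign_preservation_estimates_general u m hm hmpos hu hsmooth hmdef
end

section
/- Suppose y : [0,t₀) → ℝ satisfies 1/y(t) ≤ C₃(t − t₋)(t − t₊) with y > 0, where 0 < t₋ < t₊ are the roots of t² − (C₀/C₃)t + 1/(C₃ m₀) = 0, C₀, C₃, m₀ > 0 and (C₀/C₃)² > 2/(C₃ m₀). Then y(t) → +∞ as t approaches some time T* ≤ t₋. -/
open Real Filter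

/- For `t < t₋ ≤ t₊` both factors of `C₃ (t - t₋)(t - t₊)` are negative, so the bound is positive and
tends to `0⁺` as `t → t₋⁻`; hence `y ≥ 1 / (C₃ (t - t₋)(t - t₊)) → +∞`. The only thing to check is that
`t₋ > 0`, so that `y` is constrained on a left neighbourhood of `t₋`: this is `√(b² - c) < b` for
`b = C₀/C₃ > 0` and `c = 2/(C₃m₀) > 0`. -/

section OrderedField

variable {α 𝕜 : Type*} [Field 𝕜] [LinearOrder 𝕜] [IsStrictOrderedRing 𝕜] [TopologicalSpace 𝕜]
  [OrderTopology 𝕜]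

theorem tendsto_atTop_of_one_div_le {l : Filter α} {f y : α → 𝕜}
    (hf : Tendsto f l (nhdsWithin 0 (Set.Ioi 0)))
    (hy : ∀ᶠ t in l, 0 < y t ∧ 1 / y t ≤ f t) :
    Tendsto y l atTop := by
  refine tendsto_atTop_mono' l ?_ hf.inv_tendsto_nhdsGT_zero
  filter_upwards [hy] with t ⟨hpos, hle⟩
  calc (f t)⁻¹ ≤ (1 / y t)⁻¹ := inv_anti₀ (one_div_pos.2 hpos) hle
    _ = y t := by rw [one_div, inv_inv]

theorem tendsto_mul_sub_mul_sub_nhdsGT_zero [IsTopologicalRing 𝕜] {c a b : 𝕜}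
    (hc : 0 < c) (hab : a ≤ b) :
    Tendsto (fun t => c * (t - a) * (t - b)) (nhdsWithin a (Set.Iio a))
      (nhdsWithin 0 (Set.Ioi 0)) := by
  refine tendsto_nhdsWithin_iff.2 ⟨?_, ?_⟩
  · have hcont : Continuous fun t : 𝕜 => c * (t - a) * (t - b) := by fun_prop
    exact (hcont.tendsto' a 0 (by ring)).mono_left nhdsWithin_le_nhds
  · filter_upwards [self_mem_nhdsWithin] with t (ht : t < a)
    exact mul_pos_of_neg_of_neg (mul_neg_of_pos_of_neg hc (sub_neg.2 ht))
      (sub_neg.2 (ht.trans_le hab))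

end OrderedField

theorem Real.sqrt_sq_sub_lt {b c : ℝ} (hb : 0 < b) (hc : 0 < c) : √(b ^ 2 - c) < b :=
  (Real.sqrt_lt' hb).2 (by linarith)

theorem quadratic_bound_blowup_general (C₀ C₃ m₀ t₀ tm tp : ℝ)
    (hC₀ : 0 < C₀) (hC₃ : 0 < C₃) (hm₀ : 0 < m₀)
    (htm : tm = C₀/(2*C₃) - (1/2) * Real.sqrt ((C₀/C₃)^2 - 2/(C₃*m₀)))
    (htp : tp = C₀/(2*C₃) + (1/2) * Real.sqrt ((C₀/C₃)^2 - 2/(C₃*m₀)))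
    (ht₀ : tm ≤ t₀)
    (y : ℝ → ℝ)
    (hy : ∀ t ∈ Set.Ico (0:ℝ) t₀, 0 < y t ∧ 1/(y t) ≤ C₃ * (t - tm) * (t - tp)) :
    ∃ T : ℝ, T ≤ tm ∧ Tendsto y (nhdsWithin T (Set.Iio T)) atTop := by
  have hroot_lt := Real.sqrt_sq_sub_lt (div_pos hC₀ hC₃) (by positivity : 0 < 2 / (C₃ * m₀))
  have htm_pos : 0 < tm := by
    rw [htm, show C₀ / (2 * C₃) = C₀ / C₃ / 2 by ring]
    linarith
  have htm_le_tp : tm ≤ tp := by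
    rw [htm, htp]
    linarith [Real.sqrt_nonneg ((C₀/C₃)^2 - 2/(C₃*m₀))]
  refine ⟨tm, le_rfl, tendsto_atTop_of_one_div_le
    (tendsto_mul_sub_mul_sub_nhdsGT_zero hC₃ htm_le_tp) ?_⟩
  filter_upwards [Ioo_mem_nhdsLT htm_pos] with t ht
  exact hy t ⟨ht.1.le, ht.2.trans_le ht₀⟩

/-- If `y > 0` satisfies `1/y(t) ≤ C₃(t - t₋)(t - t₊)` on `[0, t₀)` where `t₋ < t₊` are the
roots of `t² - (C₀/C₃)t + 1/(C₃m₀) = 0` (with `(C₀/C₃)² > 2/(C₃m₀)`), then `y` blows up: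
`y(t) → +∞` as `t` approaches some time `T* ≤ t₋`. -/
theorem quadratic_bound_blowup (C₀ C₃ m₀ t₀ tm tp : ℝ)
    (hC₀ : 0 < C₀) (hC₃ : 0 < C₃) (hm₀ : 0 < m₀)
    (hdisc : 2/(C₃*m₀) < (C₀/C₃)^2)
    (htm : tm = C₀/(2*C₃) - (1/2) * Real.sqrt ((C₀/C₃)^2 - 2/(C₃*m₀)))
    (htp : tp = C₀/(2*C₃) + (1/2) * Real.sqrt ((C₀/C₃)^2 - 2/(C₃*m₀)))
    (ht₀ : tm ≤ t₀)
    (y : ℝ → ℝ)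
    (hy : ∀ t ∈ Set.Ico (0:ℝ) t₀, 0 < y t ∧ 1/(y t) ≤ C₃ * (t - tm) * (t - tp)) :
    ∃ T : ℝ, T ≤ tm ∧ Tendsto y (nhdsWithin T (Set.Iio T)) atTop :=
  quadratic_bound_blowup_general C₀ C₃ m₀ t₀ tm tp hC₀ hC₃ hm₀ htm htp ht₀ y hy
end
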